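/- Fix t ∈ T and let K be the stochastic alternating class kernel built from the finite set F = {f_1, …, f_m} of class functions. For any f ∈ F, any element t′ ∈ B_t^∞ such that f(t′) = ⟨x, y⟩ ∈ X_i^f × Y_i^f, and any measurable sets U ∈ 𝒳_i^f and V ∈ 𝒴_i^f with A = f^{-1}(U × V): if v_i(x, V) > 0 and x ∈ U, then A ∈ R_t^∞. -/

import Mathlib

open MeasureTheory ProbabilityTheory Filter

universe u v

noncomputable section

/-- The `n`-th iterate of a Markov transition kernel: `kiter K 0` is the identity kernel and
`kiter K (n+1) (s, A) = ∫ K(s', A) (kiter K n)(s, ds')`, so `kiter K n = K^n` for `n ≥ 1`. -/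
def kiter {S : Type u} [MeasurableSpace S] (K : Kernel S S) : ℕ → Kernel S S
  | 0 => Kernel.id
  | n + 1 => K ∘ₖ kiter K n

/-- `K` is `π`-irreducible: from every point, every set of positive `π`-measure is reached
with positive probability after some number `n ≥ 1` of steps. -/
def PiIrreducible {S : Type u} [MeasurableSpace S] (K : Kernel S S) (π : Measure S) : Prop :=
  ∀ s : S, ∀ A : Set S, MeasurableSet A → 0 < π A → ∃ n : ℕ, 1 ≤ n ∧ 0 < kiter K n s A

/-- `π` is a stationary distribution of `K`: `∫ K(s, A) π(ds) = π(A)` for all measurable `A`. -/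
def StationaryFor {S : Type u} [MeasurableSpace S] (K : Kernel S S) (π : Measure S) : Prop :=
  ∀ A : Set S, MeasurableSet A → ∫⁻ s, K s A ∂π = π A

/-- `K` is periodic relative to `π`: there are `d ≥ 2` pairwise disjoint nonempty measurable
sets `E_0, …, E_{d-1}` and a `π`-null measurable set `N` covering `S` such that from `E_i` the
kernel moves to `E_{(i+1) mod d}` with probability one. -/
def PeriodicK {S : Type u} [MeasurableSpace S] (K : Kernel S S) (π : Measure S) : Prop :=
  ∃ d : ℕ, ∃ hd : 2 ≤ d, ∃ E : Fin d → Set S, ∃ N : Set S,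
    (∀ i, MeasurableSet (E i)) ∧ MeasurableSet N ∧ (∀ i, (E i).Nonempty) ∧
    Pairwise (fun i j => Disjoint (E i) (E j)) ∧
    (⋃ i, E i) ∪ N = Set.univ ∧ π N = 0 ∧
    ∀ i : Fin d, ∀ s ∈ E i, K s (E ⟨(i.1 + 1) % d, Nat.mod_lt _ (by omega)⟩) = 1

/-- `K` is aperiodic relative to `π` if it is not periodic. -/
def AperiodicK {S : Type u} [MeasurableSpace S] (K : Kernel S S) (π : Measure S) : Prop :=
  ¬ PeriodicK K π

/-- Total variation norm of a (bounded signed) set function: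
`‖λ‖ = sup_{A measurable} λ(A) − inf_{A measurable} λ(A)`. -/
def tvnorm {S : Type u} [MeasurableSpace S] (lam : Set S → ℝ) : ℝ :=
  (⨆ A : {A : Set S // MeasurableSet A}, lam A.1) - (⨅ A : {A : Set S // MeasurableSet A}, lam A.1)

/-- The iterates of `K` started at `s` converge to `π` in total variation norm:
`lim_{n→∞} ‖K^n(s, ·) − π‖ = 0`. -/
def TVConvergesTo {S : Type u} [MeasurableSpace S] (K : Kernel S S) (π : Measure S) (s : S) : Prop :=
  Tendsto (fun n : ℕ => tvnorm (fun A => (kiter K (n + 1) s A).toReal - (π A).toReal))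
    atTop (nhds 0)

/-- The data of the class-kernel setting for a single class function `f` on a probability
space `(T, Σ, π)`: a countable index set `I`, families of measurable spaces `(X i, 𝒳 i)` and
`(Y i, 𝒴 i)` whose disjoint union forms the generalized product space `C = ⨆ i, X i × Y i`,
an injective two-way measurable class function `f : T → C`, regular conditional probabilities
`v i : X i × 𝒴 i → [0,1]` disintegrating the (conditioned) pushforward `f_*π` on each class,
parameterized Markov transition kernels `K i x` on `(Y i, 𝒴 i)` measurable in `x`, and the
resulting class kernel `Kf` on `(T, Σ)` given by
`Kf(t, A) = (K i x)(y, {y' | ⟨x, y'⟩ ∈ f(A)})` where `f(t) = ⟨i, x, y⟩`. -/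
structure ClassKernelData (T : Type u) [MeasurableSpace T] (π : Measure T) where
  /-- the countable index set -/
  (I : Type v)
  [countI : Countable I]
  /-- the `X`-components of the generalized product space -/
  (X : I → Type v)
  /-- the `Y`-components of the generalized product space -/
  (Y : I → Type v)
  [mX : ∀ i, MeasurableSpace (X i)]
  [mY : ∀ i, MeasurableSpace (Y i)]
  /-- the class function `f : T → C = ⨆ i, X i × Y i` -/
  f : T → Σ i : I, X i × Y i
  f_inj : Function.Injective f
  f_meas : Measurable f
  /-- `f` is two-way measurable: images of measurable sets are measurable -/
  f_image : ∀ A : Set T, MeasurableSet A → MeasurableSet (f '' A)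
  /-- the regular conditional probabilities `v i : X i × 𝒴 i → [0,1]` -/
  v : ∀ i, X i → Measure (Y i)
  v_prob : ∀ i x, IsProbabilityMeasure (v i x)
  v_meas : ∀ i (V : Set (Y i)), MeasurableSet V → Measurable fun x => v i x V
  /-- the disintegration property: for each class `i` of positive `f_*π`-mass,
  `(f_*π)_i(U × V) = ∫_U v_i(x, V) (f_*π)_i(dx × Y_i)` (stated in unnormalized form, which is
  equivalent since the normalizing constant appears identically on both sides) -/
  v_eq : ∀ i : I, 0 < π.map f (Set.range (Sigma.mk i)) →
    ∀ (U : Set (X i)) (V : Set (Y i)), MeasurableSet U → MeasurableSet V →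
      (π.map f).comap (Sigma.mk i) (U ×ˢ V)
        = ∫⁻ x in U, v i x V ∂(((π.map f).comap (Sigma.mk i)).map Prod.fst)
  /-- the parameterized Markov transition kernels `K i x` on `(Y i, 𝒴 i)` -/
  K : ∀ i, X i → Kernel (Y i) (Y i)
  K_markov : ∀ i x, IsMarkovKernel (K i x)
  K_meas : ∀ i (y : Y i) (V : Set (Y i)), MeasurableSet V → Measurable fun x => K i x y V
  /-- the class kernel `Kf` on `(T, Σ)` -/
  Kf : Kernel T T
  Kf_markov : IsMarkovKernel Kf
  /-- the class kernel is given by `Kf(t, A) = (K i x)(y, {y' ∈ Y i | ⟨x, y'⟩ ∈ f(A)})`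
  where `f(t) = ⟨i, x, y⟩` -/
  Kf_eq : ∀ (t : T) (A : Set T), MeasurableSet A → ∀ (i : I) (x : X i) (y : Y i),
    f t = ⟨i, (x, y)⟩ →
      Kf t A = K i x y {y' : Y i | (⟨i, (x, y')⟩ : Σ j : I, X j × Y j) ∈ f '' A}

attribute [instance] ClassKernelData.countI ClassKernelData.mX ClassKernelData.mY

/-- The projection `f_x` of a class function onto the `X`-components. -/
def ClassKernelData.fx {T : Type u} [MeasurableSpace T] {π : Measure T}
    (d : ClassKernelData T π) : T → Σ i : d.I, d.X i :=
  fun t => ⟨(d.f t).1, (d.f t).2.1⟩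

/-- `R_t^∞`: the collection of measurable sets reachable from `t` by the kernel `K` in some
number `n ≥ 1` of steps with positive probability. -/
def Rinf {T : Type u} [MeasurableSpace T] (K : Kernel T T) (t : T) : Set (Set T) :=
  {A | MeasurableSet A ∧ ∃ n : ℕ, 1 ≤ n ∧ 0 < kiter K n t A}

/-- `B_t^∞`: the set of points `t'` such that every measurable set containing `t'` is
reachable from `t` by the kernel `K`. -/
def Binf {T : Type u} [MeasurableSpace T] (K : Kernel T T) (t : T) : Set T :=
  {t' | ∀ A : Set T, MeasurableSet A → t' ∈ A → A ∈ Rinf K t}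

/-- A finite family of class functions connects the probability space `(T, Σ, π)`:
for every measurable `A` and every pair `f, g` in the family, if
`π(f_x⁻¹(f_x(A)) ∩ g_x⁻¹((g_x(A))ᶜ)) = 0` and `π(f_x⁻¹((f_x(A))ᶜ) ∩ g_x⁻¹(g_x(A))) = 0`,
then `π(f_x⁻¹((f_x(A))ᶜ)) = 0` or `π(g_x⁻¹((g_x(A))ᶜ)) = 0`. -/
def Connects {T : Type u} [MeasurableSpace T] (π : Measure T) {m : ℕ}
    (D : Fin m → ClassKernelData.{u, v} T π) : Prop :=
  ∀ A : Set T, MeasurableSet A → ∀ k l : Fin m,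
    π ((D k).fx ⁻¹' ((D k).fx '' A) ∩ (D l).fx ⁻¹' ((D l).fx '' A)ᶜ) = 0 →
    π ((D k).fx ⁻¹' ((D k).fx '' A)ᶜ ∩ (D l).fx ⁻¹' ((D l).fx '' A)) = 0 →
    π ((D k).fx ⁻¹' ((D k).fx '' A)ᶜ) = 0 ∨ π ((D l).fx ⁻¹' ((D l).fx '' A)ᶜ) = 0


/-!
From `f(t') = ⟨i, x, y⟩`, irreducibility of `K i x` gives `n` with `(K i x)^n(y, V) > 0`. On the
fiber `{y' | ⟨i, x, y'⟩ ∈ range f}`, which `K i x` never leaves, `f` conjugates the class kernel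
`K_f` to `K i x`, so `K_f^n(t', A) ≥ (K i x)^n(y, V) > 0`; since `K ≥ p_k K_f`, also
`K^n(t', A) > 0`.
As `t' ∈ B_t^∞`, the measurable set `{s | K^n(s, A) ≥ K^n(t', A)}` is reached from `t` in some
`n₀` steps, hence `K^{n₀+n}(t, A) > 0`.
-/

theorem measurableEmbedding_sigmaMk {α : Type*} {β : α → Type*} [∀ a, MeasurableSpace (β a)]
    (i : α) : MeasurableEmbedding (Sigma.mk (β := β) i) where
  injective := sigma_mk_injective
  measurable := fun _ hs => MeasurableSpace.measurableSet_iInf.1 hs i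
  measurableSet_image' := by
    intro M hM
    refine MeasurableSpace.measurableSet_iInf.2 fun a => ?_
    by_cases h : a = i
    · subst h
      show MeasurableSet (Sigma.mk a ⁻¹' (Sigma.mk a '' M))
      rwa [sigma_mk_preimage_image_eq_self]
    · show MeasurableSet (Sigma.mk a ⁻¹' (Sigma.mk i '' M))
      rw [sigma_mk_preimage_image' (Ne.symm h)]
      exact MeasurableSet.empty

section Iterates

variable {S : Type*} [MeasurableSpace S]

theorem kiter_succ_apply (κ : Kernel S S) (n : ℕ) (s : S) {A : Set S} (hA : MeasurableSet A) :
    kiter κ (n + 1) s A = ∫⁻ u, κ u A ∂(kiter κ n s) :=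
  Kernel.comp_apply' _ _ _ hA

theorem kiter_add (κ : Kernel S S) [IsSFiniteKernel κ] (a b : ℕ) :
    kiter κ (a + b) = kiter κ b ∘ₖ kiter κ a := by
  induction b with
  | zero => exact (Kernel.id_comp _).symm
  | succ n ih => rw [← Nat.add_assoc, kiter, kiter, ih, Kernel.comp_assoc]

theorem kiter_apply_compl_eq_zero {κ : Kernel S S} {E : Set S} (hE : MeasurableSet E)
    (hκ : ∀ s ∈ E, κ s Eᶜ = 0) (n : ℕ) {s : S} (hs : s ∈ E) : kiter κ n s Eᶜ = 0 := by
  induction n with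
  | zero => exact (Measure.dirac_apply' _ hE.compl).trans (Set.indicator_of_notMem (by simpa) _)
  | succ n ih =>
    rw [kiter_succ_apply _ _ _ hE.compl]
    refine lintegral_eq_zero_of_ae_eq_zero ?_
    filter_upwards [mem_ae_iff.2 ih] with u hu using hκ u hu

theorem kiter_apply_eq_map {S' : Type*} [MeasurableSpace S'] {κ : Kernel S S} {η : Kernel S' S'}
    {g : S' → S} (hg : Measurable g) {E : Set S'} (hE : MeasurableSet E)
    (hη : ∀ s ∈ E, η s Eᶜ = 0) (hκ : ∀ s ∈ E, κ (g s) = (η s).map g) (n : ℕ) {s : S'}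
    (hs : s ∈ E) : kiter κ n (g s) = (kiter η n s).map g := by
  induction n with
  | zero => exact (Measure.map_dirac' hg s).symm
  | succ n ih =>
    ext C hC
    calc kiter κ (n + 1) (g s) C
        = ∫⁻ s', κ (g s') C ∂(kiter η n s) := by
          rw [kiter_succ_apply _ _ _ hC, ih, lintegral_map (κ.measurable_coe hC) hg]
      _ = ∫⁻ s', η s' (g ⁻¹' C) ∂(kiter η n s) := by
          refine lintegral_congr_ae ?_
          filter_upwards [mem_ae_iff.2 (kiter_apply_compl_eq_zero hE hη n hs)] with s' hs'
          rw [hκ s' hs', Measure.map_apply hg hC]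
      _ = (kiter η (n + 1) s).map g C := by
          rw [Measure.map_apply hg hC, kiter_succ_apply _ _ _ (hg hC)]

theorem pow_mul_kiter_le {κ κ' : Kernel S S} {c : ENNReal}
    (h : ∀ s (A : Set S), MeasurableSet A → c * κ' s A ≤ κ s A) (n : ℕ) (s : S) {A : Set S}
    (hA : MeasurableSet A) : c ^ n * kiter κ' n s A ≤ kiter κ n s A := by
  induction n generalizing s A with
  | zero => simp [kiter]
  | succ n ih =>
    have hle : c ^ n • kiter κ' n s ≤ kiter κ n s :=
      Measure.le_iff.2 fun B hB => ih s hB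
    calc c ^ (n + 1) * kiter κ' (n + 1) s A
        = ∫⁻ u, c * κ' u A ∂(c ^ n • kiter κ' n s) := by
          rw [kiter_succ_apply _ _ _ hA, lintegral_smul_measure,
            lintegral_const_mul _ (κ'.measurable_coe hA), smul_eq_mul, pow_succ, mul_assoc]
      _ ≤ ∫⁻ u, κ u A ∂(kiter κ n s) := lintegral_mono' hle fun u => h u A hA
      _ = kiter κ (n + 1) s A := (kiter_succ_apply _ _ _ hA).symm

theorem mem_Rinf_of_mem_Binf {κ : Kernel S S} [IsSFiniteKernel κ] {t t' : S}
    (ht' : t' ∈ Binf κ t) {A : Set S} (hA : MeasurableSet A) {n : ℕ}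
    (hpos : 0 < kiter κ n t' A) : A ∈ Rinf κ t := by
  set B : Set S := {s | kiter κ n t' A ≤ kiter κ n s A}
  have hB : MeasurableSet B := measurableSet_le measurable_const (Kernel.measurable_coe _ hA)
  obtain ⟨-, n₀, hn₀, hB_pos⟩ := ht' B hB (le_refl (kiter κ n t' A))
  refine ⟨hA, n₀ + n, hn₀.trans (Nat.le_add_right _ _), ?_⟩
  calc 0 < kiter κ n t' A * kiter κ n₀ t B := ENNReal.mul_pos hpos.ne' hB_pos.ne'
    _ = ∫⁻ s, B.indicator (fun _ => kiter κ n t' A) s ∂(kiter κ n₀ t) :=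
        (lintegral_indicator_const hB _).symm
    _ ≤ ∫⁻ s, kiter κ n s A ∂(kiter κ n₀ t) :=
        lintegral_mono fun s => Set.indicator_le (fun _ hs => hs) s
    _ = kiter κ (n₀ + n) t A := by rw [kiter_add, Kernel.comp_apply' _ _ _ hA]

end Iterates

namespace ClassKernelData

variable {T : Type u} [MeasurableSpace T] {π : Measure T} (d : ClassKernelData.{u, v} T π)

theorem measurableEmbedding_f : MeasurableEmbedding d.f :=
  ⟨d.f_inj, d.f_meas, d.f_image⟩

theorem measurable_sigmaMk_prodMk (i : d.I) (x : d.X i) :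
    Measurable fun y' : d.Y i => (⟨i, (x, y')⟩ : Σ j, d.X j × d.Y j) :=
  (measurableEmbedding_sigmaMk i).measurable.comp measurable_prodMk_left

def fiber (i : d.I) (x : d.X i) : Set (d.Y i) :=
  {y' | ⟨i, (x, y')⟩ ∈ Set.range d.f}

/-- `y' ↦ f⁻¹⟨i, x, y'⟩` on the fiber, extended by `t₀`; it is measurable since `f` is a
measurable embedding. -/
def fiberLift (i : d.I) (x : d.X i) (t₀ : T) (y' : d.Y i) : T :=
  Function.extend d.f id (fun _ => t₀) ⟨i, (x, y')⟩

theorem measurableSet_fiber (i : d.I) (x : d.X i) : MeasurableSet (d.fiber i x) :=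
  d.measurable_sigmaMk_prodMk i x d.measurableEmbedding_f.measurableSet_range

theorem measurable_fiberLift (i : d.I) (x : d.X i) (t₀ : T) : Measurable (d.fiberLift i x t₀) :=
  (d.measurableEmbedding_f.measurable_extend measurable_id measurable_const).comp
    (d.measurable_sigmaMk_prodMk i x)

theorem fiberLift_eq {i : d.I} {x : d.X i} {y' : d.Y i} {s : T} (h : d.f s = ⟨i, (x, y')⟩)
    (t₀ : T) : d.fiberLift i x t₀ y' = s := by
  rw [fiberLift, ← h]
  exact d.f_inj.extend_apply _ _ s

theorem f_fiberLift {i : d.I} {x : d.X i} {y' : d.Y i} (hy' : y' ∈ d.fiber i x) (t₀ : T) :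
    d.f (d.fiberLift i x t₀ y') = ⟨i, (x, y')⟩ := by
  obtain ⟨s, hs⟩ := hy'
  rw [d.fiberLift_eq hs, hs]

theorem K_apply_fiber_compl {i : d.I} {x : d.X i} {y' : d.Y i} (hy' : y' ∈ d.fiber i x) :
    d.K i x y' (d.fiber i x)ᶜ = 0 := by
  have := d.K_markov i x
  have := d.Kf_markov
  obtain ⟨s, hs⟩ := hy'
  rw [prob_compl_eq_zero_iff (d.measurableSet_fiber i x), ← measure_univ (μ := d.Kf s),
    d.Kf_eq s _ MeasurableSet.univ i x y' hs, Set.image_univ]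
  rfl

theorem Kf_fiberLift {i : d.I} {x : d.X i} {y' : d.Y i} (hy' : y' ∈ d.fiber i x) (t₀ : T) :
    d.Kf (d.fiberLift i x t₀ y') = (d.K i x y').map (d.fiberLift i x t₀) := by
  ext C hC
  rw [d.Kf_eq _ C hC i x y' (d.f_fiberLift hy' t₀),
    Measure.map_apply (d.measurable_fiberLift i x t₀) hC]
  refine measure_congr (Filter.eventuallyEq_set.2 ?_)
  filter_upwards [mem_ae_iff.2 (d.K_apply_fiber_compl hy')] with y'' hy''
  rw [← d.f_fiberLift hy'' t₀, d.f_inj.mem_set_image]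
  rfl

theorem kiter_Kf_fiberLift {i : d.I} {x : d.X i} {y' : d.Y i} (hy' : y' ∈ d.fiber i x) (t₀ : T)
    (n : ℕ) :
    kiter d.Kf n (d.fiberLift i x t₀ y') = (kiter (d.K i x) n y').map (d.fiberLift i x t₀) :=
  kiter_apply_eq_map (d.measurable_fiberLift i x t₀) (d.measurableSet_fiber i x)
    (fun _ => d.K_apply_fiber_compl) (fun _ hs => d.Kf_fiberLift hs t₀) n hy'

theorem measurableSet_preimage_sigmaMk_image_prod (i : d.I) {U : Set (d.X i)} {V : Set (d.Y i)}
    (hU : MeasurableSet U) (hV : MeasurableSet V) :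
    MeasurableSet (d.f ⁻¹' (Sigma.mk i '' (U ×ˢ V))) :=
  d.f_meas ((measurableEmbedding_sigmaMk i).measurableSet_image' (hU.prod hV))

theorem kiter_K_apply_le_kiter_Kf_apply {t' : T} {i : d.I} {x : d.X i} {y : d.Y i}
    (hft : d.f t' = ⟨i, (x, y)⟩) {U : Set (d.X i)} {V : Set (d.Y i)} (hU : MeasurableSet U)
    (hV : MeasurableSet V) (hxU : x ∈ U) (n : ℕ) :
    kiter (d.K i x) n y V ≤ kiter d.Kf n t' (d.f ⁻¹' (Sigma.mk i '' (U ×ˢ V))) := by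
  have hy : y ∈ d.fiber i x := ⟨t', hft⟩
  rw [← d.fiberLift_eq hft t', d.kiter_Kf_fiberLift hy, Measure.map_apply
    (d.measurable_fiberLift i x t') (d.measurableSet_preimage_sigmaMk_image_prod i hU hV)]
  refine measure_mono_ae ?_
  filter_upwards [mem_ae_iff.2 (kiter_apply_compl_eq_zero (d.measurableSet_fiber i x)
    (fun _ => d.K_apply_fiber_compl) n hy)] with y' hy' hy'V
  show d.f (d.fiberLift i x t' y') ∈ Sigma.mk i '' (U ×ˢ V)
  rw [d.f_fiberLift hy']
  exact ⟨(x, y'), ⟨hxU, hy'V⟩, rfl⟩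

end ClassKernelData

theorem stmt4_general {T : Type u} [MeasurableSpace T] (π : Measure T)
    {m : ℕ} (D : Fin m → ClassKernelData.{u, v} T π)
    (hirr : ∀ k i x, PiIrreducible ((D k).K i x) ((D k).v i x))
    (p : Fin m → ENNReal) (hp : ∀ k, 0 < p k ∧ p k < 1)
    (K : Kernel T T) [IsMarkovKernel K]
    (hK : ∀ (t : T) (A : Set T), MeasurableSet A → K t A = ∑ k, p k * (D k).Kf t A)
    (t : T) (k : Fin m) (t' : T) (ht' : t' ∈ Binf K t)
    (i : (D k).I) (x : (D k).X i) (y : (D k).Y i)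
    (hft : (D k).f t' = ⟨i, (x, y)⟩)
    (U : Set ((D k).X i)) (V : Set ((D k).Y i)) (hU : MeasurableSet U) (hV : MeasurableSet V)
    (A : Set T) (hA : A = (D k).f ⁻¹' (Sigma.mk i '' (U ×ˢ V)))
    (hv : 0 < (D k).v i x V) (hxU : x ∈ U) :
    A ∈ Rinf K t := by
  have hAmeas : MeasurableSet A := hA ▸ (D k).measurableSet_preimage_sigmaMk_image_prod i hU hV
  obtain ⟨n, -, hVpos⟩ := hirr k i x y V hV hv
  have hKf_pos : 0 < kiter (D k).Kf n t' A :=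
    hA ▸ hVpos.trans_le ((D k).kiter_K_apply_le_kiter_Kf_apply hft hU hV hxU n)
  have hK_ge : ∀ s B, MeasurableSet B → p k * (D k).Kf s B ≤ K s B := fun s B hB =>
    (hK s B hB).symm ▸ Finset.single_le_sum (f := fun l => p l * (D l).Kf s B)
      (fun _ _ => zero_le) (Finset.mem_univ k)
  exact mem_Rinf_of_mem_Binf ht' hAmeas <|
    (ENNReal.mul_pos (pow_ne_zero n (hp k).1.ne') hKf_pos.ne').trans_le
      (pow_mul_kiter_le hK_ge n t' hAmeas)

/-- Fix `t ∈ T` and let `K` be the stochastic alternating class kernel built from the finite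
family `D` of class functions with weights `p`. For any member `f = (D k).f` of the family,
any `t' ∈ B_t^∞` with `f(t') = ⟨x, y⟩ ∈ X i × Y i`, and any measurable `U ∈ 𝒳 i`, `V ∈ 𝒴 i`
with `A = f⁻¹(U × V)`: if `v i x V > 0` and `x ∈ U`, then `A ∈ R_t^∞`. -/
theorem stmt4 {T : Type u} [MeasurableSpace T] (π : Measure T) [IsProbabilityMeasure π]
    {m : ℕ} (D : Fin m → ClassKernelData.{u, v} T π)
    (hirr : ∀ k i x, PiIrreducible ((D k).K i x) ((D k).v i x))
    (haper : ∀ k i x, AperiodicK ((D k).K i x) ((D k).v i x))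
    (hstat : ∀ k i x, StationaryFor ((D k).K i x) ((D k).v i x))
    (p : Fin m → ENNReal) (hp : ∀ k, 0 < p k ∧ p k < 1) (hpsum : ∑ k, p k = 1)
    (K : Kernel T T) [IsMarkovKernel K]
    (hK : ∀ (t : T) (A : Set T), MeasurableSet A → K t A = ∑ k, p k * (D k).Kf t A)
    (t : T) (k : Fin m) (t' : T) (ht' : t' ∈ Binf K t)
    (i : (D k).I) (x : (D k).X i) (y : (D k).Y i)
    (hft : (D k).f t' = ⟨i, (x, y)⟩)
    (U : Set ((D k).X i)) (V : Set ((D k).Y i)) (hU : MeasurableSet U) (hV : MeasurableSet V)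
    (A : Set T) (hA : A = (D k).f ⁻¹' (Sigma.mk i '' (U ×ˢ V)))
    (hv : 0 < (D k).v i x V) (hxU : x ∈ U) :
    A ∈ Rinf K t :=
  stmt4_general π D hirr p hp K hK t k t' ht' i x y hft U V hU hV A hA hv hxU
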